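/- arXiv:2106.09552 — 6 statements merged into one kernel-verified Lean document; each statement's English description precedes it below -/
import Mathlib

section
/- Let V be a finite nonempty set and let π, η : V → ℝ be probability vectors with π strictly positive. For k ∈ ℕ, let μ_{k,π} and μ_{k,η} denote the Multinomial distributions with k trials and success probabilities π, η respectively, viewed as measures on configurations ξ : V → ℕ with total sum k. Then the chi-squared distance satisfies ∑_ξ μ_{k,π}(ξ) * ((μ_{k,η}(ξ)/μ_{k,π}(ξ))^2 - 1) = (1 + ∑_{x∈V} π(x) * (η(x)/π(x) - 1)^2)^k - 1. -/
open Finset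

/-- Multinomial distribution with `k` trials and success probabilities `p`,
viewed on the configuration space of `ξ : V → ℕ` with total sum `k`
(each coordinate is at most `k`, so we encode it with `Fin (k+1)`). -/
noncomputable def multinomialPMF {V : Type*} [Fintype V] [DecidableEq V] (k : ℕ) (p : V → ℝ)
    (ξ : {ξ : V → Fin (k + 1) // ∑ x, (ξ x : ℕ) = k}) : ℝ :=
  (Nat.factorial k : ℝ) * ∏ x, p x ^ (ξ.1 x : ℕ) / (Nat.factorial (ξ.1 x) : ℝ)

/-
Multinomial weights are products over the sites, so for each configuration ξ
`μ_{k,η}(ξ)² / μ_{k,π}(ξ) = μ_{k,q}(ξ)` with `q = η² / π`, where `μ_{k,q}` is the multinomial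
weight of the non-normalised vector `q`. Summing over ξ, the multinomial theorem gives
`(∑ₓ η(x)² / π(x))ᵏ`, and `∑ₓ η(x)² / π(x) = 1 + ∑ₓ π(x) (η(x)/π(x) - 1)²` because π and η
both sum to one.
-/

section Multinomial

variable {V : Type*} [Fintype V] [DecidableEq V] {k : ℕ}

def configEquivPiAntidiag (k : ℕ) :
    {ξ : V → Fin (k + 1) // ∑ x, (ξ x : ℕ) = k} ≃ (piAntidiag (univ : Finset V) k) where
  toFun ξ := ⟨fun x => ξ.1 x, mem_piAntidiag.2 ⟨ξ.2, by simp⟩⟩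
  invFun f := ⟨fun x => ⟨f.1 x, Nat.lt_succ_of_le <| by
      simpa [(mem_piAntidiag.1 f.2).1] using single_le_sum (fun i _ => Nat.zero_le (f.1 i)) (mem_univ x)⟩,
    (mem_piAntidiag.1 f.2).1⟩
  left_inv ξ := by ext; simp
  right_inv f := by ext; simp

lemma multinomialPMF_eq_multinomial_mul_prod (p : V → ℝ)
    (ξ : {ξ : V → Fin (k + 1) // ∑ x, (ξ x : ℕ) = k}) :
    multinomialPMF k p ξ = Nat.multinomial univ (fun x => ξ.1 x) * ∏ x, p x ^ (ξ.1 x : ℕ) := by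
  have hspec : (∏ x, ((ξ.1 x : ℕ).factorial : ℝ)) * Nat.multinomial univ (fun x => ξ.1 x)
      = k.factorial := by
    exact_mod_cast ξ.2 ▸ Nat.multinomial_spec univ (fun x => (ξ.1 x : ℕ))
  rw [multinomialPMF, prod_div_distrib, ← hspec]
  field_simp

theorem sum_multinomialPMF (k : ℕ) (p : V → ℝ) :
    ∑ ξ, multinomialPMF k p ξ = (∑ x, p x) ^ k := by
  rw [sum_pow_eq_sum_piAntidiag, ← sum_coe_sort (piAntidiag univ k)]
  exact Fintype.sum_equiv (configEquivPiAntidiag k) _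
    (fun f => (Nat.multinomial univ f.1 : ℝ) * ∏ x, p x ^ f.1 x)
    (multinomialPMF_eq_multinomial_mul_prod p)

lemma multinomialPMF_pos {p : V → ℝ} (hp : ∀ x, 0 < p x)
    (ξ : {ξ : V → Fin (k + 1) // ∑ x, (ξ x : ℕ) = k}) : 0 < multinomialPMF k p ξ := by
  unfold multinomialPMF
  exact mul_pos (by positivity) (prod_pos fun x _ => div_pos (pow_pos (hp x) _) (by positivity))

lemma multinomialPMF_sq_div {p q : V → ℝ} (hp : ∀ x, p x ≠ 0)
    (ξ : {ξ : V → Fin (k + 1) // ∑ x, (ξ x : ℕ) = k}) :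
    multinomialPMF k q ξ ^ 2 / multinomialPMF k p ξ
      = multinomialPMF k (fun x => q x ^ 2 / p x) ξ := by
  have hM : (Nat.multinomial univ (fun x => (ξ.1 x : ℕ)) : ℝ) ≠ 0 := by
    exact_mod_cast (Nat.multinomial_pos _ _).ne'
  have hP : ∏ x, p x ^ (ξ.1 x : ℕ) ≠ 0 := prod_ne_zero_iff.2 fun x _ => pow_ne_zero _ (hp x)
  have hQ : (∏ x, q x ^ (ξ.1 x : ℕ)) ^ 2 = ∏ x, (q x ^ 2) ^ (ξ.1 x : ℕ) := by
    rw [← prod_pow]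
    exact prod_congr rfl fun x _ => pow_right_comm _ _ _
  simp only [multinomialPMF_eq_multinomial_mul_prod, div_pow, prod_div_distrib, mul_pow, hQ]
  field_simp

end Multinomial

lemma one_add_sum_mul_div_sub_one_sq {V : Type*} [Fintype V] {π η : V → ℝ}
    (hπ : ∀ x, π x ≠ 0) (hπ1 : ∑ x, π x = 1) (hη1 : ∑ x, η x = 1) :
    1 + ∑ x, π x * (η x / π x - 1) ^ 2 = ∑ x, η x ^ 2 / π x := by
  have hterm (x : V) : π x * (η x / π x - 1) ^ 2 = η x ^ 2 / π x - 2 * η x + π x := by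
    have := hπ x
    field_simp
    ring
  simp only [hterm, sum_add_distrib, sum_sub_distrib, ← mul_sum, hπ1, hη1]
  ring

theorem chi_squared_multinomial_general {V : Type*} [Fintype V] [DecidableEq V]
    (k : ℕ) (π η : V → ℝ)
    (hπpos : ∀ x, 0 < π x) (hπ1 : ∑ x, π x = 1)
    (hη1 : ∑ x, η x = 1) :
    ∑ ξ : {ξ : V → Fin (k + 1) // ∑ x, (ξ x : ℕ) = k},
        multinomialPMF k π ξ * ((multinomialPMF k η ξ / multinomialPMF k π ξ) ^ 2 - 1)
      = (1 + ∑ x, π x * (η x / π x - 1) ^ 2) ^ k - 1 := by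
  have hπ : ∀ x, π x ≠ 0 := fun x => (hπpos x).ne'
  have hterm (ξ : {ξ : V → Fin (k + 1) // ∑ x, (ξ x : ℕ) = k}) :
      multinomialPMF k π ξ * ((multinomialPMF k η ξ / multinomialPMF k π ξ) ^ 2 - 1)
        = multinomialPMF k (fun x => η x ^ 2 / π x) ξ - multinomialPMF k π ξ := by
    have hξ := (multinomialPMF_pos hπpos ξ).ne'
    rw [← multinomialPMF_sq_div hπ]
    field_simp
  rw [sum_congr rfl fun ξ _ => hterm ξ, sum_sub_distrib, sum_multinomialPMF, sum_multinomialPMF,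
    hπ1, one_pow, one_add_sum_mul_div_sub_one_sq hπ hπ1 hη1]

theorem chi_squared_multinomial {V : Type*} [Fintype V] [DecidableEq V] [Nonempty V]
    (k : ℕ) (π η : V → ℝ)
    (hπpos : ∀ x, 0 < π x) (hπ1 : ∑ x, π x = 1)
    (hηpos : ∀ x, 0 ≤ η x) (hη1 : ∑ x, η x = 1) :
    ∑ ξ : {ξ : V → Fin (k + 1) // ∑ x, (ξ x : ℕ) = k},
        multinomialPMF k π ξ * ((multinomialPMF k η ξ / multinomialPMF k π ξ) ^ 2 - 1)
      = (1 + ∑ x, π x * (η x / π x - 1) ^ 2) ^ k - 1 :=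
  chi_squared_multinomial_general k π η hπpos hπ1 hη1
end

section
/- Let V be a finite set, π a strictly positive probability vector on V, and η any probability vector on V. For distinct x, y ∈ V, define η^{xy} : V → ℝ by η^{xy}(x) = (π(x)/(π(x)+π(y)))·(η(x)+η(y)), η^{xy}(y) = (π(y)/(π(x)+π(y)))·(η(x)+η(y)), and η^{xy}(z) = η(z) for z ≠ x, y. Then ∑_{z∈V} π(z)·(η^{xy}(z)/π(z) − 1)^2 − ∑_{z∈V} π(z)·(η(z)/π(z) − 1)^2 = −(π(x)π(y)/(π(x)+π(y)))·(η(x)/π(x) − η(y)/π(y))^2. -/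
/-! Only the coordinates `x` and `y` change, so the difference of the two sums is a two-point
quantity. With `p = π x`, `q = π y`, `a = η x`, `b = η y`, the pooled mass `a + b` split in
proportion `p : q` has density `(a + b) / (p + q)` at both points, and the two-point
identity is the variance decomposition of the densities `a / p`, `b / q` under weights `p`, `q`. -/

open Finset

theorem Fintype.sum_sub_sum_eq_of_eq_off_pair {V M : Type*} [Fintype V] [AddCommGroup M]
    {f g : V → M} {x y : V} (hxy : x ≠ y) (hfg : ∀ z, z ≠ x → z ≠ y → f z = g z) :
    ∑ z, f z - ∑ z, g z = (f x - g x) + (f y - g y) := by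
  rw [← sum_sub_distrib]
  exact Fintype.sum_eq_add x y hxy fun z ⟨hzx, hzy⟩ => sub_eq_zero.mpr (hfg z hzx hzy)

theorem proportional_split_sq_dist_sub {K : Type*} [Field K] {p q : K} (a b : K)
    (hp : p ≠ 0) (hq : q ≠ 0) (hpq : p + q ≠ 0) :
    (p * (p / (p + q) * (a + b) / p - 1) ^ 2 + q * (q / (p + q) * (a + b) / q - 1) ^ 2)
      - (p * (a / p - 1) ^ 2 + q * (b / q - 1) ^ 2)
      = -(p * q / (p + q) * (a / p - b / q) ^ 2) := by
  field_simp
  ring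

theorem averaging_move_L2_identity_general {V : Type*} [Fintype V] [DecidableEq V]
    (π η : V → ℝ) (hπpos : ∀ z, 0 < π z)
    (x y : V) (hxy : x ≠ y)
    (ηxy : V → ℝ)
    (hηxy : ηxy = fun z =>
      if z = x then π x / (π x + π y) * (η x + η y)
      else if z = y then π y / (π x + π y) * (η x + η y)
      else η z) :
    ∑ z, π z * (ηxy z / π z - 1) ^ 2 - ∑ z, π z * (η z / π z - 1) ^ 2
      = -(π x * π y / (π x + π y) * (η x / π x - η y / π y) ^ 2) := by
  subst hηxy
  rw [Fintype.sum_sub_sum_eq_of_eq_off_pair hxy fun z hzx hzy => by simp only [hzx, hzy, if_false],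
    ← proportional_split_sq_dist_sub (η x) (η y) (hπpos x).ne' (hπpos y).ne'
      (add_pos (hπpos x) (hπpos y)).ne']
  simp only [if_true, hxy.symm, if_false]
  ring

theorem averaging_move_L2_identity {V : Type*} [Fintype V] [DecidableEq V]
    (π η : V → ℝ) (hπpos : ∀ z, 0 < π z) (hπ1 : ∑ z, π z = 1)
    (hηpos : ∀ z, 0 ≤ η z) (hη1 : ∑ z, η z = 1)
    (x y : V) (hxy : x ≠ y)
    (ηxy : V → ℝ)
    (hηxy : ηxy = fun z =>
      if z = x then π x / (π x + π y) * (η x + η y)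
      else if z = y then π y / (π x + π y) * (η x + η y)
      else η z) :
    ∑ z, π z * (ηxy z / π z - 1) ^ 2 - ∑ z, π z * (η z / π z - 1) ^ 2
      = -(π x * π y / (π x + π y) * (η x / π x - η y / π y) ^ 2) :=
  averaging_move_L2_identity_general π η hπpos x y hxy ηxy hηxy
end

section
/- Let V be a finite set, π strictly positive probability weights, and x ≠ y in V. Then for any probability vector η on V, the averaged configuration η^{xy} (pooling the mass at x and y and redistributing proportionally to π(x), π(y)) satisfies ∑_z π(z)·(η^{xy}(z)/π(z) − 1)^2 ≤ ∑_z π(z)·(η(z)/π(z) − 1)^2. In particular the weighted L²-distance to π is non-increasing under any averaging move. -/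
open Finset

theorem Finset.sum_le_sum_of_pair_le {V M : Type*} [Fintype V] [DecidableEq V]
    [AddCommMonoid M] [PartialOrder M] [IsOrderedAddMonoid M] {f g : V → M} {x y : V}
    (hxy : x ≠ y) (hpair : g x + g y ≤ f x + f y) (hrest : ∀ z, z ≠ x → z ≠ y → g z = f z) :
    ∑ z, g z ≤ ∑ z, f z := by
  rw [← sum_sdiff (subset_univ {x, y}), ← sum_sdiff (subset_univ {x, y}),
    sum_pair hxy, sum_pair hxy]
  refine add_le_add (le_of_eq (sum_congr rfl fun z hz => ?_)) hpair
  simp only [mem_sdiff, mem_univ, mem_insert, mem_singleton, true_and, not_or] at hz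
  exact hrest z hz.1 hz.2

theorem pair_L2_sub_average_eq {a b : ℝ} (ha : 0 < a) (hb : 0 < b) (p q : ℝ) :
    a * (p / a - 1) ^ 2 + b * (q / b - 1) ^ 2
      - (a * (a / (a + b) * (p + q) / a - 1) ^ 2 + b * (b / (a + b) * (p + q) / b - 1) ^ 2)
      = (p * b - q * a) ^ 2 / (a * b * (a + b)) := by
  have hab : a + b ≠ 0 := by positivity
  field_simp
  ring

theorem pair_L2_average_le {a b : ℝ} (ha : 0 < a) (hb : 0 < b) (p q : ℝ) :
    a * (a / (a + b) * (p + q) / a - 1) ^ 2 + b * (b / (a + b) * (p + q) / b - 1) ^ 2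
      ≤ a * (p / a - 1) ^ 2 + b * (q / b - 1) ^ 2 := by
  rw [← sub_nonneg, pair_L2_sub_average_eq ha hb]
  positivity

theorem averaging_move_L2_nonincreasing_general {V : Type*} [Fintype V] [DecidableEq V]
    (π η : V → ℝ) (hπpos : ∀ z, 0 < π z)
    (x y : V) (hxy : x ≠ y)
    (ηxy : V → ℝ)
    (hηxy : ηxy = fun z =>
      if z = x then π x / (π x + π y) * (η x + η y)
      else if z = y then π y / (π x + π y) * (η x + η y)
      else η z) :
    ∑ z, π z * (ηxy z / π z - 1) ^ 2 ≤ ∑ z, π z * (η z / π z - 1) ^ 2 := by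
  subst hηxy
  apply Finset.sum_le_sum_of_pair_le hxy
  · simpa only [if_pos, if_neg hxy.symm, if_true] using
      pair_L2_average_le (hπpos x) (hπpos y) (η x) (η y)
  · intro z hzx hzy
    simp only [if_neg hzx, if_neg hzy]

theorem averaging_move_L2_nonincreasing {V : Type*} [Fintype V] [DecidableEq V]
    (π η : V → ℝ) (hπpos : ∀ z, 0 < π z) (hπ1 : ∑ z, π z = 1)
    (hηpos : ∀ z, 0 ≤ η z) (hη1 : ∑ z, η z = 1)
    (x y : V) (hxy : x ≠ y)
    (ηxy : V → ℝ)
    (hηxy : ηxy = fun z =>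
      if z = x then π x / (π x + π y) * (η x + η y)
      else if z = y then π y / (π x + π y) * (η x + η y)
      else η z) :
    ∑ z, π z * (ηxy z / π z - 1) ^ 2 ≤ ∑ z, π z * (η z / π z - 1) ^ 2 :=
  averaging_move_L2_nonincreasing_general π η hπpos x y hxy ηxy hηxy
end

section
/- Let V be a finite set with strictly positive probability weights (π(x))_{x∈V}, and fix distinct x, y ∈ V with p := π(x), q := π(y). For any ψ : V × V → ℝ, the quantity ∑_{z∈V} π(z)(ψ(x,z) − ψ(y,z))² − (pq/(p+q))·((ψ(x,x) − ψ(y,x)) + (ψ(y,y) − ψ(x,y)))² is nonnegative. -/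
open Finset

/- Restricting the sum to z ∈ {x, y} leaves p u² + q v² with u = ψ(x,x) − ψ(y,x), v = ψ(y,y) − ψ(x,y),
and p u² + q v² − (pq/(p+q))(u+v)² = (pu − qv)²/(p+q) ≥ 0. -/

theorem mul_div_add_mul_add_sq_le {𝕜 : Type*} [Field 𝕜] [LinearOrder 𝕜] [IsStrictOrderedRing 𝕜]
    {p q : 𝕜} (hp : 0 ≤ p) (hq : 0 ≤ q) (u v : 𝕜) :
    p * q / (p + q) * (u + v) ^ 2 ≤ p * u ^ 2 + q * v ^ 2 := by
  rcases (add_nonneg hp hq).eq_or_lt with hpq | hpq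
  · rw [← hpq, div_zero, zero_mul]
    positivity
  · have key : p * u ^ 2 + q * v ^ 2 - p * q / (p + q) * (u + v) ^ 2
        = (p * u - q * v) ^ 2 / (p + q) := by
      field_simp
      ring
    have : 0 ≤ (p * u - q * v) ^ 2 / (p + q) := by positivity
    linarith

theorem Finset.add_le_univ_sum_of_nonneg {ι M : Type*} [Fintype ι] [AddCommMonoid M] [PartialOrder M]
    [IsOrderedAddMonoid M] {f : ι → M} (hf : ∀ i, 0 ≤ f i) {i j : ι} (hij : i ≠ j) :
    f i + f j ≤ ∑ k, f k := by
  classical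
  rw [← sum_pair hij]
  exact sum_le_univ_sum_of_nonneg hf

theorem dirichlet_comparison_pointwise_estimate_general {V : Type*} [Fintype V]
    (π : V → ℝ) (hπpos : ∀ z, 0 < π z)
    (x y : V) (hxy : x ≠ y) (ψ : V → V → ℝ) :
    0 ≤ ∑ z, π z * (ψ x z - ψ y z) ^ 2
        - π x * π y / (π x + π y) * ((ψ x x - ψ y x) + (ψ y y - ψ x y)) ^ 2 := by
  have hpair := add_le_univ_sum_of_nonneg (f := fun z ↦ π z * (ψ x z - ψ y z) ^ 2)
    (fun z ↦ mul_nonneg (hπpos z).le (sq_nonneg _)) hxy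
  have hquad := mul_div_add_mul_add_sq_le (hπpos x).le (hπpos y).le
    (ψ x x - ψ y x) (ψ y y - ψ x y)
  rw [sub_sq_comm (ψ x y)] at hpair
  linarith

theorem dirichlet_comparison_pointwise_estimate {V : Type*} [Fintype V]
    (π : V → ℝ) (hπpos : ∀ z, 0 < π z) (hπ1 : ∑ z, π z = 1)
    (x y : V) (hxy : x ≠ y) (ψ : V → V → ℝ) :
    0 ≤ ∑ z, π z * (ψ x z - ψ y z) ^ 2
        - π x * π y / (π x + π y) * ((ψ x x - ψ y x) + (ψ y y - ψ x y)) ^ 2 :=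
  dirichlet_comparison_pointwise_estimate_general π hπpos x y hxy ψ
end

section
/- Let V be a finite set, π strictly positive probability weights, x ≠ y ∈ V, and let Y ~ Binomial(m, p) with m = ξ(x)+ξ(y) and p = π(x)/(π(x)+π(y)) for a configuration ξ : V → ℕ with ∑_z ξ(z) = k. Define the random configuration Ξ by Ξ(x) = Y, Ξ(y) = m − Y, Ξ(z) = ξ(z) for z ∉ {x,y}. If ξ is distributed according to Multinomial(k, π), then Ξ is also distributed according to Multinomial(k, π). -/
open Finset

/-- Transition kernel of the one-edge Binomial thermalization move at `{x,y}`: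
the configuration is left unchanged off `{x, y}`, the total number
`m = ξ x + ξ y` of particles at `{x,y}` is conserved, and the new number of
particles at `x` is `Binomial(m, π x / (π x + π y))`-distributed. -/
noncomputable def binKernel {V : Type*} [Fintype V] [DecidableEq V] (k : ℕ) (π : V → ℝ)
    (x y : V) (ξ ζ : {ξ : V → Fin (k + 1) // ∑ x, (ξ x : ℕ) = k}) : ℝ :=
  if (∀ z, z ≠ x → z ≠ y → ζ.1 z = ξ.1 z) ∧ ((ζ.1 x : ℕ) + (ζ.1 y : ℕ) = (ξ.1 x : ℕ) + (ξ.1 y : ℕ))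
  then (Nat.choose ((ξ.1 x : ℕ) + (ξ.1 y : ℕ)) (ζ.1 x : ℕ) : ℝ) *
        (π x / (π x + π y)) ^ (ζ.1 x : ℕ) *
        (1 - π x / (π x + π y)) ^ ((ξ.1 x : ℕ) + (ξ.1 y : ℕ) - (ζ.1 x : ℕ))
  else 0

/-!
Detailed balance: when `ζ` arises from `ξ` by redistributing the `m` particles at `{x, y}`,
both `Mult(ξ) K(ξ, ζ)` and `Mult(ζ) K(ζ, ξ)` equal `k! m! / (π x + π y) ^ m` times the common
factors `π z ^ ξ z / (ξ z)!` for `z ∉ {x, y}` and the factors `π x ^ w x / (w x)!`,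
`π y ^ w y / (w y)!` for both `w = ξ` and `w = ζ`. Summing over `ξ`, invariance follows since every
row of the kernel is a binomial distribution and so sums to `1`.
-/

abbrev Config (V : Type*) [Fintype V] (k : ℕ) := {ξ : V → Fin (k + 1) // ∑ x, (ξ x : ℕ) = k}

@[to_additive]
lemma Fintype.prod_eq_mul_mul_prod_erase_erase {V M : Type*} [Fintype V] [DecidableEq V]
    [CommMonoid M] (g : V → M) {x y : V} (hxy : x ≠ y) :
    ∏ z, g z = g x * g y * ∏ z ∈ (univ.erase x).erase y, g z := by
  rw [← mul_prod_erase univ g (mem_univ x),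
    ← mul_prod_erase _ g (mem_erase.2 ⟨hxy.symm, mem_univ y⟩), mul_assoc]

lemma choose_mul_div_pow_mul_one_sub_div_pow {a b : ℝ} (hab : a + b ≠ 0) {m c d : ℕ}
    (hcd : c + d = m) :
    (m.choose c : ℝ) * (a / (a + b)) ^ c * (1 - a / (a + b)) ^ (m - c) =
      m.factorial / (a + b) ^ m * (a ^ c / c.factorial * (b ^ d / d.factorial)) := by
  subst hcd
  have hb : 1 - a / (a + b) = b / (a + b) := by field_simp; ring
  rw [Nat.add_sub_cancel_left, Nat.cast_choose ℝ (Nat.le_add_right c d), Nat.add_sub_cancel_left,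
    hb, div_pow, div_pow, pow_add]
  field_simp

namespace Config

variable {V : Type*} [Fintype V] {k : ℕ}

def IsRedistribution (x y : V) (ξ ζ : Config V k) : Prop :=
  (∀ z, z ≠ x → z ≠ y → ζ.1 z = ξ.1 z) ∧ (ζ.1 x : ℕ) + ζ.1 y = ξ.1 x + ξ.1 y

variable {x y : V} {ξ ζ : Config V k}

lemma IsRedistribution.symm (h : IsRedistribution x y ξ ζ) : IsRedistribution x y ζ ξ :=
  ⟨fun z hzx hzy => (h.1 z hzx hzy).symm, h.2.symm⟩

lemma IsRedistribution.ext {ξ' : Config V k} (h : IsRedistribution x y ζ ξ)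
    (h' : IsRedistribution x y ζ ξ') (hx : ξ.1 x = ξ'.1 x) : ξ = ξ' := by
  refine Subtype.ext (funext fun z => ?_)
  by_cases hzx : z = x
  · rw [hzx, hx]
  by_cases hzy : z = y
  · subst hzy
    exact Fin.ext (by have := h.2; have := h'.2; have := congrArg Fin.val hx; omega)
  rw [h.1 z hzx hzy, h'.1 z hzx hzy]

lemma exists_isRedistribution [DecidableEq V] (hxy : x ≠ y) (ζ : Config V k) {j : ℕ}
    (hj : j ≤ ζ.1 x + ζ.1 y) : ∃ ξ : Config V k, IsRedistribution x y ζ ξ ∧ (ξ.1 x : ℕ) = j := by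
  have hζ := ζ.2
  rw [Fintype.sum_eq_add_add_sum_erase_erase _ hxy] at hζ
  let f : V → Fin (k + 1) := fun z =>
    if z = x then ⟨j, by omega⟩ else if z = y then ⟨ζ.1 x + ζ.1 y - j, by omega⟩ else ζ.1 z
  have hfx : (f x : ℕ) = j := by simp [f]
  have hfy : (f y : ℕ) = ζ.1 x + ζ.1 y - j := by simp [f, hxy.symm]
  have hf : ∀ z, z ≠ x → z ≠ y → f z = ζ.1 z := fun z hzx hzy => by simp [f, hzx, hzy]
  have hrest : ∑ z ∈ (univ.erase x).erase y, (f z : ℕ)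
      = ∑ z ∈ (univ.erase x).erase y, (ζ.1 z : ℕ) :=
    sum_congr rfl fun z hz => by
      rw [hf z (ne_of_mem_erase (mem_of_mem_erase hz)) (ne_of_mem_erase hz)]
  have hsum : ∑ z, (f z : ℕ) = k := by
    rw [Fintype.sum_eq_add_add_sum_erase_erase _ hxy, hrest, hfx, hfy]
    omega
  exact ⟨⟨f, hsum⟩, ⟨hf, by simp only [hfx, hfy]; omega⟩, hfx⟩

end Config

section

open Config

variable {V : Type*} [Fintype V] [DecidableEq V] {k : ℕ} {x y : V}

lemma binKernel_of_isRedistribution (π : V → ℝ) {ξ ζ : Config V k}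
    (h : IsRedistribution x y ξ ζ) :
    binKernel k π x y ξ ζ = (((ξ.1 x : ℕ) + ξ.1 y).choose (ζ.1 x) : ℝ) *
      (π x / (π x + π y)) ^ (ζ.1 x : ℕ) *
      (1 - π x / (π x + π y)) ^ ((ξ.1 x : ℕ) + ξ.1 y - ζ.1 x) :=
  if_pos h

lemma binKernel_of_not_isRedistribution (π : V → ℝ) {ξ ζ : Config V k}
    (h : ¬ IsRedistribution x y ξ ζ) : binKernel k π x y ξ ζ = 0 :=
  if_neg h

lemma sum_binKernel (π : V → ℝ) (hxy : x ≠ y) (ζ : Config V k) :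
    ∑ ξ, binKernel k π x y ζ ξ = 1 := by
  classical
  set m := (ζ.1 x : ℕ) + ζ.1 y
  set p := π x / (π x + π y)
  calc ∑ ξ, binKernel k π x y ζ ξ
      = ∑ ξ ∈ univ.filter (IsRedistribution x y ζ),
          (m.choose (ξ.1 x) : ℝ) * p ^ (ξ.1 x : ℕ) * (1 - p) ^ (m - ξ.1 x) := by
        rw [sum_filter]
        refine sum_congr rfl fun ξ _ => ?_
        split_ifs with h
        · exact binKernel_of_isRedistribution π h
        · exact binKernel_of_not_isRedistribution π h
    _ = ∑ j ∈ range (m + 1), (m.choose j : ℝ) * p ^ j * (1 - p) ^ (m - j) := by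
        refine sum_nbij (fun ξ => (ξ.1 x : ℕ)) ?_ ?_ ?_ fun _ _ => rfl
        · intro ξ hξ
          have := (mem_filter.1 hξ).2.2
          simp only [mem_range]
          omega
        · intro ξ hξ ξ' hξ' hx
          exact (mem_filter.1 hξ).2.ext (mem_filter.1 hξ').2 (Fin.ext hx)
        · intro j hj
          obtain ⟨ξ, hξ, hξx⟩ := exists_isRedistribution hxy ζ (Nat.lt_succ_iff.1 (mem_range.1 hj))
          exact ⟨ξ, by simpa using hξ, hξx⟩
    _ = (p + (1 - p)) ^ m := by
        rw [add_pow]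
        exact sum_congr rfl fun j _ => by ring
    _ = 1 := by simp

lemma multinomialPMF_mul_binKernel_comm (π : V → ℝ) (hπ : π x + π y ≠ 0) (hxy : x ≠ y)
    (ξ ζ : Config V k) :
    multinomialPMF k π ξ * binKernel k π x y ξ ζ
      = multinomialPMF k π ζ * binKernel k π x y ζ ξ := by
  by_cases h : IsRedistribution x y ξ ζ
  swap
  · rw [binKernel_of_not_isRedistribution π h,
      binKernel_of_not_isRedistribution π (mt IsRedistribution.symm h), mul_zero, mul_zero]
  have hrest : ∏ z ∈ (univ.erase x).erase y, π z ^ (ξ.1 z : ℕ) / (ξ.1 z : ℕ).factorial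
      = ∏ z ∈ (univ.erase x).erase y, π z ^ (ζ.1 z : ℕ) / (ζ.1 z : ℕ).factorial :=
    prod_congr rfl fun z hz => by
      rw [h.1 z (ne_of_mem_erase (mem_of_mem_erase hz)) (ne_of_mem_erase hz)]
  rw [binKernel_of_isRedistribution π h, binKernel_of_isRedistribution π h.symm,
    choose_mul_div_pow_mul_one_sub_div_pow hπ h.2,
    choose_mul_div_pow_mul_one_sub_div_pow hπ h.2.symm, multinomialPMF, multinomialPMF,
    Fintype.prod_eq_mul_mul_prod_erase_erase _ hxy,
    Fintype.prod_eq_mul_mul_prod_erase_erase _ hxy, hrest, h.2]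
  ring

end

theorem multinomial_invariant_binomial_splitting_general {V : Type*} [Fintype V] [DecidableEq V]
    (k : ℕ) (π : V → ℝ)
    (hπpos : ∀ z, 0 < π z)
    (x y : V) (hxy : x ≠ y)
    (ζ : {ξ : V → Fin (k + 1) // ∑ x, (ξ x : ℕ) = k}) :
    ∑ ξ : {ξ : V → Fin (k + 1) // ∑ x, (ξ x : ℕ) = k},
        multinomialPMF k π ξ * binKernel k π x y ξ ζ = multinomialPMF k π ζ := by
  have hπ : π x + π y ≠ 0 := (add_pos (hπpos x) (hπpos y)).ne'
  calc ∑ ξ : Config V k, multinomialPMF k π ξ * binKernel k π x y ξ ζ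
      = ∑ ξ : Config V k, multinomialPMF k π ζ * binKernel k π x y ζ ξ :=
        sum_congr rfl fun ξ _ => multinomialPMF_mul_binKernel_comm π hπ hxy ξ ζ
    _ = multinomialPMF k π ζ := by rw [← mul_sum, sum_binKernel π hxy ζ, mul_one]

/-- The Multinomial distribution is invariant under the Binomial
thermalization move of the Binomial Splitting process. -/
theorem multinomial_invariant_binomial_splitting {V : Type*} [Fintype V] [DecidableEq V]
    [Nonempty V] (k : ℕ) (π : V → ℝ)
    (hπpos : ∀ z, 0 < π z) (hπ1 : ∑ z, π z = 1)
    (x y : V) (hxy : x ≠ y)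
    (ζ : {ξ : V → Fin (k + 1) // ∑ x, (ξ x : ℕ) = k}) :
    ∑ ξ : {ξ : V → Fin (k + 1) // ∑ x, (ξ x : ℕ) = k},
        multinomialPMF k π ξ * binKernel k π x y ξ ζ = multinomialPMF k π ζ :=
  multinomial_invariant_binomial_splitting_general k π hπpos x y hxy ζ
end

section
/- Let L be a generator (Markov rate matrix) on a finite state space Ω with reversible probability measure μ, and let (S_t)_{t≥0} = (e^{tL})_{t≥0} be the associated semigroup. Suppose g : Ω → ℝ with E_μ[g] = 0 satisfies: there exist λ > 0, and a nonnegative function h : Ω → ℝ with |g| ≤ C·h pointwise for some C > 0, such that S_t applied from any state contracts E[h] at rate λ, i.e., for all states ω and t ≥ 0, E_ω[h(ω_t)] ≤ e^{−λ t} h(ω). If moreover L g = −λ' g for some λ' > 0 and g is not identically zero, then λ' ≥ λ. -/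
open Finset Matrix

/-!
The transition matrices `exp (t • L)`, `t ≥ 0`, of a generator are entrywise nonnegative, so
they preserve the domination `|g| ≤ C h`. Since `exp (t • L)` multiplies the eigenfunction `g` by
`e^{-λ' t}` while it shrinks `h` by at least `e^{-λ t}`, at a state with `g ω ≠ 0` we get
`e^{-λ' t} |g ω| ≤ C e^{-λ t} h ω` for all `t ≥ 0`, which forces `λ ≤ λ'`.
-/

open NormedSpace Filter
open scoped Nat

namespace Matrix

variable {ι : Type*} [Fintype ι]

theorem abs_mulVec_apply_le {P : Matrix ι ι ℝ} (hP : ∀ i j, 0 ≤ P i j) {g h : ι → ℝ}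
    (hgh : ∀ j, |g j| ≤ h j) (i : ι) : |(P *ᵥ g) i| ≤ (P *ᵥ h) i :=
  (abs_sum_le_sum_abs _ _).trans <| sum_le_sum fun j _ => by
    rw [abs_mul, abs_of_nonneg (hP i j)]
    exact mul_le_mul_of_nonneg_left (hgh j) (hP i j)

variable [DecidableEq ι]

theorem hasSum_exp (A : Matrix ι ι ℝ) :
    HasSum (fun n : ℕ => (n !⁻¹ : ℝ) • A ^ n) (exp A) := by
  let _ : NormedRing (Matrix ι ι ℝ) := Matrix.linftyOpNormedRing
  let _ : NormedAlgebra ℝ (Matrix ι ι ℝ) := Matrix.linftyOpNormedAlgebra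
  exact exp_series_hasSum_exp' A

theorem exp_mulVec_of_mulVec_eq_smul {A : Matrix ι ι ℝ} {v : ι → ℝ} {c : ℝ}
    (hv : A *ᵥ v = c • v) : exp A *ᵥ v = Real.exp c • v := by
  have hpow (n : ℕ) : A ^ n *ᵥ v = c ^ n • v := by
    induction n with
    | zero => simp
    | succ n ih =>
      rw [pow_succ', ← mulVec_mulVec, ih, mulVec_smul, hv, smul_smul, pow_succ, mul_comm]
  have hseries := (hasSum_exp A).map (mulVec.addMonoidHomLeft v)
    (continuous_id.matrix_mulVec continuous_const)
  refine hseries.unique ?_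
  rw [Real.exp_eq_exp_ℝ]
  convert (exp_series_hasSum_exp' (𝕂 := ℝ) c).smul_const v using 1
  ext1 n
  simp [mulVec.addMonoidHomLeft, smul_mulVec, hpow, smul_smul]

theorem exp_apply_nonneg {A : Matrix ι ι ℝ} (hA : ∀ i j, 0 ≤ A i j) (i j : ι) :
    0 ≤ exp A i j :=
  (Pi.hasSum.mp (Pi.hasSum.mp (hasSum_exp A) i) j).nonneg fun n =>
    mul_nonneg (by positivity) (pow_apply_nonneg hA n i j)

theorem exp_smul_one (r : ℝ) : exp (r • (1 : Matrix ι ι ℝ)) = Real.exp r • 1 := by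
  rw [smul_one_eq_diagonal, exp_diagonal, Pi.exp_def, ← Real.exp_eq_exp_ℝ,
    ← smul_one_eq_diagonal]

theorem exp_apply_nonneg_of_offDiag_nonneg {A : Matrix ι ι ℝ}
    (hA : ∀ i j, i ≠ j → 0 ≤ A i j) (i j : ι) : 0 ≤ exp A i j := by
  set c : ℝ := ∑ k, |A k k|
  have hshift : ∀ i j, 0 ≤ (A + c • 1) i j := by
    intro i j
    rcases eq_or_ne i j with rfl | hij
    · have : |A i i| ≤ c := single_le_sum (fun k _ => abs_nonneg (A k k)) (mem_univ i)
      simp only [add_apply, smul_apply, one_apply_eq, smul_eq_mul, mul_one]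
      linarith [neg_abs_le (A i i)]
    · simpa [one_apply_ne hij] using hA i j hij
  have hsplit : exp A = Real.exp (-c) • exp (A + c • 1) := by
    have hcomm : Commute (A + c • 1) ((-c) • (1 : Matrix ι ι ℝ)) :=
      (Commute.one_right _).smul_right _
    rw [← smul_one_mul, ← exp_smul_one, ← exp_add_of_commute _ _ hcomm.symm]
    congr 1
    module
  rw [hsplit]
  exact mul_nonneg (Real.exp_nonneg _) (exp_apply_nonneg hshift i j)

end Matrix

theorem Real.le_of_forall_mul_exp_neg_le {a b μ μ' : ℝ} (ha : 0 < a)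
    (h : ∀ t, 0 ≤ t → a * Real.exp (-(μ' * t)) ≤ b * Real.exp (-(μ * t))) : μ ≤ μ' := by
  by_contra! hlt
  have hgrowth : Tendsto (fun t => a * Real.exp ((μ - μ') * t)) atTop atTop :=
    (Real.tendsto_exp_atTop.comp (tendsto_id.const_mul_atTop (sub_pos.2 hlt))).const_mul_atTop ha
  obtain ⟨t, hbt, ht⟩ := ((hgrowth.eventually_gt_atTop b).and (eventually_ge_atTop 0)).exists
  have hrescale := mul_le_mul_of_nonneg_right (h t ht) (Real.exp_nonneg (μ * t))
  rw [mul_assoc, mul_assoc, ← Real.exp_add, ← Real.exp_add, neg_add_cancel, Real.exp_zero,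
    mul_one] at hrescale
  rw [show (μ - μ') * t = -(μ' * t) + μ * t by ring] at hbt
  linarith

theorem chen_wang_eigenvalue_lower_bound_general {Ω : Type*} [Fintype Ω] [DecidableEq Ω]
    (L : Matrix Ω Ω ℝ)
    (hoffdiag : ∀ ω ω', ω ≠ ω' → 0 ≤ L ω ω')
    (g : Ω → ℝ) (hgne : g ≠ 0)
    (lam : ℝ) (C : ℝ) (hC : 0 < C)
    (h : Ω → ℝ) (hgh : ∀ ω, |g ω| ≤ C * h ω)
    (hcontr : ∀ ω, ∀ t : ℝ, 0 ≤ t →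
      (NormedSpace.exp (t • L)).mulVec h ω ≤ Real.exp (-(lam * t)) * h ω)
    (lam' : ℝ) (heig : L.mulVec g = (-lam') • g) :
    lam ≤ lam' := by
  obtain ⟨ω, hω⟩ := Function.ne_iff.mp hgne
  refine Real.le_of_forall_mul_exp_neg_le (b := C * h ω) (abs_pos.2 hω) fun t ht => ?_
  have hP := exp_apply_nonneg_of_offDiag_nonneg (A := t • L) fun i j hij =>
    mul_nonneg ht (hoffdiag i j hij)
  have hsemigroup : exp (t • L) *ᵥ g = Real.exp (-(lam' * t)) • g := by
    refine exp_mulVec_of_mulVec_eq_smul ?_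
    rw [smul_mulVec, heig, smul_smul]
    ring_nf
  calc |g ω| * Real.exp (-(lam' * t))
      = |(exp (t • L) *ᵥ g) ω| := by
        rw [hsemigroup, Pi.smul_apply, smul_eq_mul, abs_mul, abs_of_pos (Real.exp_pos _), mul_comm]
    _ ≤ (exp (t • L) *ᵥ (C • h)) ω := abs_mulVec_apply_le hP hgh ω
    _ = C * (exp (t • L) *ᵥ h) ω := by rw [mulVec_smul, Pi.smul_apply, smul_eq_mul]
    _ ≤ C * (Real.exp (-(lam * t)) * h ω) := mul_le_mul_of_nonneg_left (hcontr ω t ht) hC.le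
    _ = C * h ω * Real.exp (-(lam * t)) := by ring

/-- Chen–Wang type argument: if an eigenfunction `g` of a reversible Markov
generator `L` (with eigenvalue `-λ'`) is dominated by a nonnegative function
`h` whose expectation contracts at rate `λ` under the semigroup `e^{tL}`,
then `λ' ≥ λ`. -/
theorem chen_wang_eigenvalue_lower_bound {Ω : Type*} [Fintype Ω] [DecidableEq Ω] [Nonempty Ω]
    (L : Matrix Ω Ω ℝ) (μ : Ω → ℝ)
    (hμpos : ∀ ω, 0 < μ ω) (hμ1 : ∑ ω, μ ω = 1)
    (hoffdiag : ∀ ω ω', ω ≠ ω' → 0 ≤ L ω ω')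
    (hrow : ∀ ω, ∑ ω', L ω ω' = 0)
    (hrev : ∀ ω ω', μ ω * L ω ω' = μ ω' * L ω' ω)
    (g : Ω → ℝ) (hgmean : ∑ ω, μ ω * g ω = 0) (hgne : g ≠ 0)
    (lam : ℝ) (hlam : 0 < lam) (C : ℝ) (hC : 0 < C)
    (h : Ω → ℝ) (hh : ∀ ω, 0 ≤ h ω) (hgh : ∀ ω, |g ω| ≤ C * h ω)
    (hcontr : ∀ ω, ∀ t : ℝ, 0 ≤ t →
      (NormedSpace.exp (t • L)).mulVec h ω ≤ Real.exp (-(lam * t)) * h ω)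
    (lam' : ℝ) (hlam' : 0 < lam') (heig : L.mulVec g = (-lam') • g) :
    lam ≤ lam' :=
  chen_wang_eigenvalue_lower_bound_general L hoffdiag g hgne lam C hC h hgh hcontr lam' heig
end
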